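/- arXiv:2004.14891 — 3 statements merged into one kernel-verified Lean document; each statement's English description precedes it below -/
import Mathlib

section
/- If C^ℓ is an ℓ-level (ε/(2ℓ))-coreset of C, where 0 ≤ ε ≤ 1 and ℓ is a positive integer, then C^ℓ is an ε-coreset of C. -/
/-- `C` is an `ε`-coreset of `X` with respect to cost function `c`. -/
def Coreset {U Q : Type*} (c : Q → (U → ℝ) → ℝ) (ε : ℝ) (C X : U → ℝ) : Prop :=
  ∀ S : Q, (1 - ε) * c S C ≤ c S X ∧ c S X ≤ (1 + ε) * c S C

/-- `LevelCoreset c ε ℓ C' C` means `C'` is an `ℓ`-level `ε`-coreset of `C`. -/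
def LevelCoreset {U Q : Type*} (c : Q → (U → ℝ) → ℝ) (ε : ℝ) :
    ℕ → (U → ℝ) → (U → ℝ) → Prop
  | 0 => fun C' C => C' = C
  | (n + 1) => fun C' C => ∃ D, LevelCoreset c ε n D C ∧ Coreset c ε C' D

/-!
Each level multiplies the cost by a factor in `[1 - δ, 1 + δ]`, so after `ℓ` levels the cost of
`C` lies between `(1 - δ)^ℓ` and `(1 + δ)^ℓ` times that of `C^ℓ`. With `ℓδ = ε/2`, Bernoulli's
inequality gives `(1 - δ)^ℓ ≥ 1 - ε/2` and the estimate `(1 + δ)^ℓ ≤ 1 + 2ℓδ` (valid while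
`ℓδ ≤ 1/2`) gives `(1 + δ)^ℓ ≤ 1 + ε`. Widening the factors needs the cost of `C^ℓ` to be
nonnegative, which any `δ`-coreset with `δ > 0` forces.
-/

theorem one_add_pow_le_one_add_two_mul {δ : ℝ} (hδ : 0 ≤ δ) :
    ∀ {n : ℕ}, n * δ ≤ 1 / 2 → (1 + δ) ^ n ≤ 1 + 2 * n * δ
  | 0, _ => by simp
  | n + 1, hn => by
    push_cast at hn
    have ih := one_add_pow_le_one_add_two_mul hδ (n := n) (by nlinarith)
    calc (1 + δ) ^ (n + 1) = (1 + δ) ^ n * (1 + δ) := pow_succ _ _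
      _ ≤ (1 + 2 * n * δ) * (1 + δ) := by gcongr
      _ ≤ 1 + 2 * ((n + 1 : ℕ) : ℝ) * δ := by push_cast; nlinarith

section

variable {U Q : Type*} {c : Q → (U → ℝ) → ℝ}

theorem Coreset.cost_nonneg {ε : ℝ} {C X : U → ℝ} (h : Coreset c ε C X) (hε : 0 < ε) (S : Q) :
    0 ≤ c S C := by
  obtain ⟨hlow, hup⟩ := h S
  nlinarith

theorem LevelCoreset.cost_nonneg {δ : ℝ} {n : ℕ} {Cl C : U → ℝ} (h : LevelCoreset c δ n Cl C)
    (hn : n ≠ 0) (hδ : 0 < δ) (S : Q) : 0 ≤ c S Cl := by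
  obtain _ | n := n
  · exact absurd rfl hn
  · obtain ⟨D, -, hD⟩ := h
    exact hD.cost_nonneg hδ S

theorem LevelCoreset.pow_bounds {δ : ℝ} (hδ : |δ| ≤ 1) :
    ∀ {n : ℕ} {Cl C : U → ℝ}, LevelCoreset c δ n Cl C → ∀ S : Q,
      (1 - δ) ^ n * c S Cl ≤ c S C ∧ c S C ≤ (1 + δ) ^ n * c S Cl
  | 0, Cl, C, h, S => by
    obtain rfl : Cl = C := h
    simp
  | n + 1, Cl, C, ⟨D, hD, hCl⟩, S => by
    obtain ⟨hlow, hup⟩ := hD.pow_bounds hδ S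
    obtain ⟨hlow', hup'⟩ := hCl S
    obtain ⟨hδ₁, hδ₂⟩ := abs_le.mp hδ
    constructor
    · calc (1 - δ) ^ (n + 1) * c S Cl = (1 - δ) ^ n * ((1 - δ) * c S Cl) := by ring
        _ ≤ (1 - δ) ^ n * c S D := mul_le_mul_of_nonneg_left hlow' (pow_nonneg (by linarith) n)
        _ ≤ c S C := hlow
    · calc c S C ≤ (1 + δ) ^ n * c S D := hup
        _ ≤ (1 + δ) ^ n * ((1 + δ) * c S Cl) :=
          mul_le_mul_of_nonneg_left hup' (pow_nonneg (by linarith) n)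
        _ = (1 + δ) ^ (n + 1) * c S Cl := by ring

end

theorem level_coreset_eps {U Q : Type*} (c : Q → (U → ℝ) → ℝ)
    (ε : ℝ) (hε0 : 0 ≤ ε) (hε1 : ε ≤ 1) (ℓ : ℕ) (hℓ : 1 ≤ ℓ) (C Cl : U → ℝ)
    (h : LevelCoreset c (ε / (2 * ℓ)) ℓ Cl C) :
    Coreset c ε Cl C := by
  have hℓ₀ : (1 : ℝ) ≤ ℓ := by exact_mod_cast hℓ
  set δ := ε / (2 * ℓ) with hδ
  have hℓδ : ℓ * δ = ε / 2 := by rw [hδ]; field_simp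
  have hδ₀ : 0 ≤ δ := by positivity
  have hδ₁ : δ ≤ 1 := by nlinarith
  intro S
  obtain ⟨hlow, hup⟩ := h.pow_bounds (abs_le.mpr ⟨by linarith, hδ₁⟩) S
  obtain rfl | hε := hε0.eq_or_lt
  · simp_all
  have hc := h.cost_nonneg (by omega) (by positivity) S
  have bernoulli : 1 + ℓ * -δ ≤ (1 + -δ) ^ ℓ := one_add_mul_le_pow (by linarith) ℓ
  rw [← sub_eq_add_neg] at bernoulli
  constructor
  · calc (1 - ε) * c S Cl ≤ (1 - δ) ^ ℓ * c S Cl := by gcongr; linarith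
      _ ≤ c S C := hlow
  · calc c S C ≤ (1 + δ) ^ ℓ * c S Cl := hup
      _ ≤ (1 + 2 * ℓ * δ) * c S Cl := by
        gcongr; exact one_add_pow_le_one_add_two_mul hδ₀ (by linarith)
      _ = (1 + ε) * c S Cl := by rw [mul_assoc, hℓδ]; ring
end

section
/- Let n be a positive integer, c a positive integer, ε a real with 0 < ε ≤ 1, and set d = n^{c+1}·⌈1/ε⌉. Given positive integers a, b with a ≤ n^c and b ≤ n^c, let f = ⌈a·d/b⌉. Then f ≤ n^{2c+1}·⌈1/ε⌉, and for any nonnegative real D, (1 − ε/n)·(a/b)·D ≤ (f/d)·D ≤ (1 + ε/n)·(a/b)·D. -/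
/-!
Rounding `a / b` up to the grid `ℤ / d` overshoots by less than `1 / d`; since
`ε d ≥ n ^ (c + 1) ≥ n b` and `a ≥ 1`, this is at most `(ε / n) · (a / b)`.
The numerator is at most `a d ≤ n ^ c · d`.
-/

section CeilRounding

variable {x d : ℝ}

theorem le_ceil_mul_div (hd : 0 < d) : x ≤ ⌈x * d⌉ / d :=
  (le_div_iff₀ hd).2 (Int.le_ceil _)

theorem ceil_mul_div_le_add_inv (hd : 0 < d) : (⌈x * d⌉ : ℝ) / d ≤ x + d⁻¹ := by
  rw [div_le_iff₀ hd, add_mul, inv_mul_cancel₀ hd.ne']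
  exact (Int.ceil_lt_add_one _).le

theorem ceil_mul_div_relative_error (hd : 0 < d) {δ : ℝ} (hdx : d⁻¹ ≤ δ * x) :
    (1 - δ) * x ≤ ⌈x * d⌉ / d ∧ (⌈x * d⌉ : ℝ) / d ≤ (1 + δ) * x := by
  have := inv_pos.2 hd
  constructor
  · linarith [le_ceil_mul_div (x := x) hd]
  · linarith [ceil_mul_div_le_add_inv (x := x) hd]

end CeilRounding

theorem one_le_mul_natCeil_inv {ε : ℝ} (hε : 0 < ε) : 1 ≤ ε * ⌈1 / ε⌉₊ := by
  calc 1 = ε * (1 / ε) := by field_simp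
    _ ≤ ε * ⌈1 / ε⌉₊ := by gcongr; exact Nat.le_ceil _

theorem inv_le_div_mul_div_of_pow_le {n c a b : ℕ} {ε d : ℝ} (hn : 0 < n) (hd : 0 < d)
    (ha : 0 < a) (hb : 0 < b) (hbn : b ≤ n ^ c) (hεd : (n : ℝ) ^ (c + 1) ≤ ε * d) :
    d⁻¹ ≤ ε / n * (a / b) := by
  have hbn' : (b : ℝ) ≤ n ^ c := by exact_mod_cast hbn
  have ha' : (1 : ℝ) ≤ a := by exact_mod_cast ha
  have hnb : (n : ℝ) * b ≤ d * (ε * a) :=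
    calc (n : ℝ) * b ≤ n ^ (c + 1) := by rw [pow_succ']; gcongr
      _ ≤ ε * d := hεd
      _ ≤ ε * d * a := le_mul_of_one_le_right (hεd.trans' (by positivity)) ha'
      _ = d * (ε * a) := by ring
  rw [div_mul_div_comm, le_div_iff₀ (by positivity), inv_mul_le_iff₀ hd]
  exact hnb

theorem weight_rounding_general (n c : ℕ) (hn : 0 < n)
    (ε : ℝ) (hε0 : 0 < ε)
    (d : ℕ) (hd : d = n ^ (c + 1) * ⌈1 / ε⌉₊)
    (a b : ℕ) (ha : 0 < a) (hb : 0 < b) (han : a ≤ n ^ c) (hbn : b ≤ n ^ c)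
    (f : ℤ) (hf : f = ⌈((a : ℚ) * d) / b⌉) :
    f ≤ (n : ℤ) ^ (2 * c + 1) * ⌈1 / ε⌉₊ ∧
      ∀ D : ℝ, 0 ≤ D →
        (1 - ε / n) * ((a : ℝ) / b) * D ≤ ((f : ℝ) / d) * D ∧
          ((f : ℝ) / d) * D ≤ (1 + ε / n) * ((a : ℝ) / b) * D := by
  have hfR : f = ⌈((a : ℝ) / b) * d⌉ := by
    rw [hf, ← Rat.ceil_cast (α := ℝ)]; push_cast; ring_nf
  have hdR : (0 : ℝ) < d := by rw [hd]; have := Nat.ceil_pos.2 (one_div_pos.2 hε0); positivity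
  have hεd : (n : ℝ) ^ (c + 1) ≤ ε * d :=
    calc (n : ℝ) ^ (c + 1) = n ^ (c + 1) * 1 := (mul_one _).symm
      _ ≤ n ^ (c + 1) * (ε * ⌈1 / ε⌉₊) := by gcongr; exact one_le_mul_natCeil_inv hε0
      _ = ε * d := by rw [hd]; push_cast; ring
  refine ⟨?_, fun D hD => ?_⟩
  · calc f ≤ (a * d : ℕ) := by
          rw [hf, Int.ceil_le]; push_cast; exact div_le_self (by positivity) (by exact_mod_cast hb)
      _ ≤ (n ^ c * (n ^ (c + 1) * ⌈1 / ε⌉₊) : ℕ) := by rw [hd]; gcongr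
      _ = (n : ℤ) ^ (2 * c + 1) * ⌈1 / ε⌉₊ := by push_cast; ring
  · obtain ⟨hlo, hhi⟩ := ceil_mul_div_relative_error hdR
      (inv_le_div_mul_div_of_pow_le hn hdR ha hb hbn hεd)
    rw [hfR]
    exact ⟨by gcongr, by gcongr⟩

theorem weight_rounding (n c : ℕ) (hn : 0 < n) (hc : 0 < c)
    (ε : ℝ) (hε0 : 0 < ε) (hε1 : ε ≤ 1)
    (d : ℕ) (hd : d = n ^ (c + 1) * ⌈1 / ε⌉₊)
    (a b : ℕ) (ha : 0 < a) (hb : 0 < b) (han : a ≤ n ^ c) (hbn : b ≤ n ^ c)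
    (f : ℤ) (hf : f = ⌈((a : ℚ) * d) / b⌉) :
    f ≤ (n : ℤ) ^ (2 * c + 1) * ⌈1 / ε⌉₊ ∧
      ∀ D : ℝ, 0 ≤ D →
        (1 - ε / n) * ((a : ℝ) / b) * D ≤ ((f : ℝ) / d) * D ∧
          ((f : ℝ) / d) * D ≤ (1 + ε / n) * ((a : ℝ) / b) * D :=
  weight_rounding_general n c hn ε hε0 d hd a b ha hb han hbn f hf
end

section
/- In the metric space construction from a Boolean N×N matrix M (points 1..4N; d(i,j)=2 for 1≤i<j≤N and for N+1≤i<j≤2N; d(i,j)=1 if 1≤i≤N<j≤2N and M_{i,j−N}=1, else 2; points above 2N at distance 100 from everything), for Boolean vectors u, v: if uᵀMv = 1 (i.e., there exist i, j with u_i = 1, v_j = 1, M_{i,j} = 1), then the point set X consisting of {i : u_i = 1} ∪ {j + N : v_j = 1} ∪ (enough far points so |X| = 2N+1) admits a set of k = 2N centers from X with k-means cost exactly 1; if uᵀMv = 0, every set of k = 2N centers chosen from X has k-means cost at least 4. -/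
/-- Points of the OMv lower-bound construction: `N` "row" points, `N` "column"
points, and `2N+1` far points. -/
abbrev Pt (N : ℕ) := Fin N ⊕ (Fin N ⊕ Fin (2 * N + 1))

/-- The distance function constructed from the Boolean matrix `M`. -/
def dM {N : ℕ} (M : Fin N → Fin N → Bool) (x y : Pt N) : ℝ :=
  if x = y then 0 else
    match x, y with
    | Sum.inl i, Sum.inr (Sum.inl j) => if M i j then 1 else 2
    | Sum.inr (Sum.inl j), Sum.inl i => if M i j then 1 else 2
    | Sum.inl _, Sum.inl _ => 2
    | Sum.inr (Sum.inl _), Sum.inr (Sum.inl _) => 2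
    | _, _ => 100

/-- The `k`-means cost of the center set `S` on the point set `X`. -/
noncomputable def kMeansCost {N : ℕ} (M : Fin N → Fin N → Bool)
    (S X : Finset (Pt N)) : ℝ :=
  ∑ x ∈ X, (⨅ s : S, dM M x (s : Pt N)) ^ 2


/-!
Since `X` has `2N + 1` points, a set `S ⊆ X` of `2N` centers leaves out exactly one point
`x₀`, and the cost is the squared distance from `x₀` to `S`. The only distances below `2`
in the construction are those between a row point `i` and a column point `j` with
`M i j = true`, which equal `1`. If `u i = v j = M i j = true`, leaving out the row point
`i` costs `1`; if no such pair exists, every distance from `x₀` to `S` is at least `2`.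
-/

section CenterCost

variable {α : Type*} {d : α → α → ℝ}

lemma iInf_eq_of_mem_of_le {S : Finset α} {x b : α} (hb : b ∈ S)
    (h : ∀ s ∈ S, d x b ≤ d x s) : ⨅ s : S, d x (s : α) = d x b :=
  have : Nonempty S := ⟨⟨b, hb⟩⟩
  le_antisymm (ciInf_le ⟨d x b, Set.forall_mem_range.2 fun s : S => h _ s.2⟩ ⟨b, hb⟩)
    (le_ciInf fun s : S => h _ s.2)

lemma sum_sq_iInf_erase [DecidableEq α] (hd : ∀ x y, 0 ≤ d x y) (hself : ∀ x, d x x = 0)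
    {X : Finset α} {a : α} (ha : a ∈ X) :
    ∑ x ∈ X, (⨅ s : X.erase a, d x (s : α)) ^ 2 =
      (⨅ s : X.erase a, d a (s : α)) ^ 2 := by
  rw [← Finset.add_sum_erase _ _ ha, add_eq_left]
  refine Finset.sum_eq_zero fun x hx => ?_
  rw [iInf_eq_of_mem_of_le hx fun s _ => (hself x).trans_le (hd x s), hself, sq, zero_mul]

lemma sq_le_sum_sq_iInf {S X : Finset α} (hS : S.Nonempty) {x₀ : α} (hx₀ : x₀ ∈ X) {c : ℝ}
    (hc : 0 ≤ c) (h : ∀ s ∈ S, c ≤ d x₀ s) :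
    c ^ 2 ≤ ∑ x ∈ X, (⨅ s : S, d x (s : α)) ^ 2 :=
  have : Nonempty S := hS.to_subtype
  calc c ^ 2 ≤ (⨅ s : S, d x₀ (s : α)) ^ 2 :=
        pow_le_pow_left₀ hc (le_ciInf fun s : S => h _ s.2) 2
    _ ≤ _ := Finset.single_le_sum (f := fun x => (⨅ s : S, d x (s : α)) ^ 2)
      (fun _ _ => sq_nonneg _) hx₀

end CenterCost

section Distance

variable {N : ℕ} (M : Fin N → Fin N → Bool)

lemma dM_self (x : Pt N) : dM M x x = 0 := by
  simp [dM]

lemma one_le_dM {x y : Pt N} (h : x ≠ y) : 1 ≤ dM M x y := by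
  unfold dM
  rcases x with i | j | m <;> rcases y with i' | j' | m' <;> simp_all <;> split_ifs <;> norm_num

lemma dM_nonneg (x y : Pt N) : 0 ≤ dM M x y := by
  rcases eq_or_ne x y with rfl | h
  · exact (dM_self M x).ge
  · exact zero_le_one.trans (one_le_dM M h)

variable {M}

lemma dM_inl_inr {i j : Fin N} (hM : M i j = true) :
    dM M (Sum.inl i) (Sum.inr (Sum.inl j)) = 1 := by
  simp [dM, hM]

lemma dM_lt_two {x y : Pt N} (h : dM M x y < 2) :
    x = y ∨ ∃ i j, M i j = true ∧
      (x = Sum.inl i ∧ y = Sum.inr (Sum.inl j) ∨ y = Sum.inl i ∧ x = Sum.inr (Sum.inl j)) := by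
  unfold dM at h
  split_ifs at h with hxy
  · exact Or.inl hxy
  · right
    rcases x with i | j | m <;> rcases y with i' | j' | m' <;> simp only at h <;>
      (try split_ifs at h with hM) <;> norm_num at h
    · exact ⟨i, j', hM, .inl ⟨rfl, rfl⟩⟩
    · exact ⟨i', j, hM, .inr ⟨rfl, rfl⟩⟩

end Distance

lemma card_union_padding {N : ℕ} {s t : Finset (Fin N)} {L R F : Finset (Pt N)}
    (hL : L = s.image Sum.inl) (hR : R = t.image fun j => Sum.inr (Sum.inl j))
    (hF : F = (Finset.univ.filter
        fun m : Fin (2 * N + 1) => (m : ℕ) < 2 * N + 1 - (L.card + R.card)).image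
        fun m => Sum.inr (Sum.inr m)) :
    (L ∪ R ∪ F).card = 2 * N + 1 := by
  have hLN : L.card ≤ N := hL ▸ Finset.card_image_le.trans (card_finset_fin_le s)
  have hRN : R.card ≤ N := hR ▸ Finset.card_image_le.trans (card_finset_fin_le t)
  have hFc : F.card = min (2 * N + 1) (2 * N + 1 - (L.card + R.card)) := by
    rw [hF, Finset.card_image_of_injective _ fun _ _ h => by simpa using h,
      Fin.card_filter_val_lt]
  have hLR : Disjoint L R := by
    simp [hL, hR, Finset.disjoint_left]
  have hLRF : Disjoint (L ∪ R) F := by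
    simp [hL, hR, hF, Finset.disjoint_left]
  rw [Finset.card_union_of_disjoint hLRF, Finset.card_union_of_disjoint hLR, hFc]
  omega

theorem omv_kmeans_gap (N : ℕ) (hN : 1 ≤ N)
    (M : Fin N → Fin N → Bool) (u v : Fin N → Bool)
    (L R F X : Finset (Pt N))
    (hL : L = (Finset.univ.filter fun i => u i).image Sum.inl)
    (hR : R = (Finset.univ.filter fun j => v j).image fun j => Sum.inr (Sum.inl j))
    (hF : F = (Finset.univ.filter
        fun m : Fin (2 * N + 1) => (m : ℕ) < 2 * N + 1 - (L.card + R.card)).image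
        fun m => Sum.inr (Sum.inr m))
    (hX : X = L ∪ R ∪ F) :
    ((∃ i j, u i = true ∧ v j = true ∧ M i j = true) →
        ∃ S ⊆ X, S.card = 2 * N ∧ kMeansCost M S X = 1) ∧
      ((¬ ∃ i j, u i = true ∧ v j = true ∧ M i j = true) →
        ∀ S ⊆ X, S.card = 2 * N → 4 ≤ kMeansCost M S X) := by
  have hXcard : X.card = 2 * N + 1 := hX ▸ card_union_padding hL hR hF
  have memL : ∀ i, (Sum.inl i : Pt N) ∈ X ↔ u i = true := by subst_vars; simp
  have memR : ∀ j, (Sum.inr (Sum.inl j) : Pt N) ∈ X ↔ v j = true := by subst_vars; simp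
  refine ⟨fun ⟨i, j, hu, hv, hM⟩ => ?_, fun hno S hSX hScard => ?_⟩
  · have ha := (memL i).2 hu
    have hb : Sum.inr (Sum.inl j) ∈ X.erase (Sum.inl i) :=
      Finset.mem_erase.2 ⟨Sum.inr_ne_inl, (memR j).2 hv⟩
    refine ⟨X.erase (Sum.inl i), X.erase_subset _,
      by rw [Finset.card_erase_of_mem ha, hXcard]; rfl, ?_⟩
    rw [kMeansCost, sum_sq_iInf_erase (dM_nonneg M) (dM_self M) ha,
      iInf_eq_of_mem_of_le hb fun s hs => (dM_inl_inr hM).trans_le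
        (one_le_dM M (Finset.ne_of_mem_erase hs).symm), dM_inl_inr hM, one_pow]
  · obtain ⟨x₀, hx₀X, hx₀S⟩ :=
      Finset.exists_mem_notMem_of_card_lt_card (by omega : S.card < X.card)
    have hS : S.Nonempty := Finset.card_pos.1 (by omega)
    refine (show (4 : ℝ) = 2 ^ 2 by norm_num).trans_le
      (sq_le_sum_sq_iInf hS hx₀X zero_le_two fun s hs => not_lt.1 fun hlt => ?_)
    rcases dM_lt_two hlt with rfl | ⟨i, j, hM, ⟨rfl, rfl⟩ | ⟨rfl, rfl⟩⟩
    · exact hx₀S hs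
    · exact hno ⟨i, j, (memL i).1 hx₀X, (memR j).1 (hSX hs), hM⟩
    · exact hno ⟨i, j, (memL i).1 (hSX hs), (memR j).1 hx₀X, hM⟩
end
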